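/- arXiv:2509.04756 — 3 statements merged into one kernel-verified Lean document; each statement's English description precedes it below -/
import Mathlib

section
/- Let 0 < r ≤ ∞ and let f be holomorphic on the punctured disk {z ∈ ℂ : 0 < |z| < r}. Then there exist a function g holomorphic on {|z| < r} and a function h holomorphic on ℂ ∖ {0} with h(z) → 0 as |z| → ∞, such that f = g + h on the punctured disk; moreover this decomposition is unique. -/
/-!
For radii `ρ₀ < ρ < ‖z‖ < R < r`, Cauchy's formula on the annulus `ρ ≤ ‖w‖ ≤ R` gives
`f z = (2πi)⁻¹ ∮_{‖w‖=R} f w / (w - z) dw - (2πi)⁻¹ ∮_{‖w‖=ρ} f w / (w - z) dw`, and by Cauchy's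
theorem each integral does not depend on its radius as long as the circle does not cross `z`.
The first term is therefore holomorphic on the whole disk `‖z‖ < r`, the second on `‖z‖ > ρ₀`,
where it is `O(1/‖z‖)`. The difference of two such decompositions glues to an entire function
tending to `0` at infinity, which vanishes by Liouville's theorem.
-/

open Filter Set Metric Complex Real Topology
open scoped ENNReal

variable {E : Type*} [NormedAddCommGroup E] [NormedSpace ℂ E]

theorem exists_pos_le_norm_circleMap_sub {c z₀ : ℂ} {R : ℝ} (hR : 0 ≤ R)
    (hz₀ : z₀ ∉ sphere c R) : ∃ δ > 0, ∀ z ∈ ball z₀ δ, ∀ θ, δ ≤ ‖circleMap c R θ - z‖ := by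
  have hd : 0 < infDist z₀ (sphere c R) :=
    (isClosed_sphere.notMem_iff_infDist_pos (NormedSpace.sphere_nonempty.2 hR)).1 hz₀
  refine ⟨infDist z₀ (sphere c R) / 2, half_pos hd, fun z hz θ => ?_⟩
  have h₁ := infDist_le_dist_of_mem (circleMap_mem_sphere c hR θ) (x := z₀)
  have h₂ := dist_triangle z₀ z (circleMap c R θ)
  rw [mem_ball, dist_comm] at hz
  rw [← dist_eq_norm, dist_comm]
  linarith

theorem hasDerivAt_circleIntegral_sub_inv_smul {φ : ℂ → E} {c z₀ : ℂ} {R : ℝ} (hR : 0 ≤ R)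
    (hφ : ContinuousOn φ (sphere c R)) (hz₀ : z₀ ∉ sphere c R) :
    HasDerivAt (fun z => ∮ w in C(c, R), (w - z)⁻¹ • φ w)
      (∮ w in C(c, R), ((w - z₀) ^ 2)⁻¹ • φ w) z₀ := by
  obtain ⟨M, hM⟩ := (isCompact_sphere c R).exists_bound_of_continuousOn hφ
  obtain ⟨δ, hδ, hsep⟩ := exists_pos_le_norm_circleMap_sub hR hz₀
  have hne : ∀ z ∈ ball z₀ δ, ∀ θ, circleMap c R θ - z ≠ 0 := fun z hz θ h => by
    have := hsep z hz θ
    rw [h, norm_zero] at this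
    linarith
  have hφc : Continuous fun θ => φ (circleMap c R θ) :=
    hφ.comp_continuous (continuous_circleMap c R) (circleMap_mem_sphere c hR)
  have hderiv : Continuous (deriv (circleMap c R)) := by
    rw [funext (deriv_circleMap c R)]; fun_prop
  have hz₀ball : z₀ ∈ ball z₀ δ := mem_ball_self hδ
  unfold circleIntegral
  refine (intervalIntegral.hasDerivAt_integral_of_dominated_loc_of_deriv_le
    (μ := MeasureTheory.volume)
    (F' := fun z θ => deriv (circleMap c R) θ • ((circleMap c R θ - z) ^ 2)⁻¹ • φ (circleMap c R θ))
    (bound := fun _ => R * ((δ ^ 2)⁻¹ * M)) (ball_mem_nhds z₀ hδ)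
    ?_ ?_ ?_ ?_ intervalIntegrable_const ?_).2
  · filter_upwards [ball_mem_nhds z₀ hδ] with z hz
    exact (hderiv.smul ((((continuous_circleMap c R).sub continuous_const).inv₀
      (hne z hz)).smul hφc)).aestronglyMeasurable
  · exact (hderiv.smul ((((continuous_circleMap c R).sub continuous_const).inv₀
      (hne z₀ hz₀ball)).smul hφc)).intervalIntegrable _ _
  · exact (hderiv.smul (((((continuous_circleMap c R).sub continuous_const).pow 2).inv₀
      fun θ => pow_ne_zero 2 (hne z₀ hz₀ball θ)).smul hφc)).aestronglyMeasurable
  · refine MeasureTheory.ae_of_all _ fun θ _ z hz => ?_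
    rw [norm_smul, norm_smul, deriv_circleMap, norm_mul, norm_circleMap_zero, norm_I, mul_one,
      abs_of_nonneg hR, norm_inv, norm_pow]
    gcongr
    · exact hsep z hz θ
    · exact hM _ (circleMap_mem_sphere c hR θ)
  · refine MeasureTheory.ae_of_all _ fun θ _ z hz => ?_
    have hθ := hne z hz θ
    have := (((hasDerivAt_id z).const_sub (circleMap c R θ)).inv hθ).smul_const
      (φ (circleMap c R θ)) |>.const_smul (deriv (circleMap c R) θ)
    convert this using 3
    all_goals simp [div_eq_mul_inv]

theorem tendsto_circleIntegral_sub_inv_smul_cobounded {φ : ℂ → E} {c : ℂ} {R : ℝ} (hR : 0 ≤ R)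
    (hφ : ContinuousOn φ (sphere c R)) :
    Tendsto (fun z => ∮ w in C(c, R), (w - z)⁻¹ • φ w) (Bornology.cobounded ℂ) (𝓝 0) := by
  obtain ⟨M, hM⟩ := (isCompact_sphere c R).exists_bound_of_continuousOn hφ
  set a := ‖c‖ + R
  have hbound : ∀ z : ℂ, a < ‖z‖ →
      ‖∮ w in C(c, R), (w - z)⁻¹ • φ w‖ ≤ 2 * π * R * ((‖z‖ - a)⁻¹ * M) := by
    intro z hz
    refine circleIntegral.norm_integral_le_of_norm_le_const hR fun w hw => ?_
    have hw' : ‖w‖ ≤ a := by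
      simpa [a, mem_sphere_iff_norm.1 hw] using norm_le_norm_add_norm_sub' w c
    rw [norm_smul, norm_inv]
    gcongr
    · linarith [norm_sub_norm_le z w, norm_sub_rev z w]
    · exact hM w hw
  have hlim : Tendsto (fun x : ℝ => 2 * π * R * ((x - a)⁻¹ * M)) atTop (𝓝 0) := by
    simpa [sub_eq_add_neg] using ((tendsto_inv_atTop_zero.comp
      (tendsto_atTop_add_const_right _ (-a) tendsto_id)).mul_const M).const_mul (2 * π * R)
  refine squeeze_zero_norm' ?_ (hlim.comp tendsto_norm_cobounded_atTop)
  filter_upwards [tendsto_norm_cobounded_atTop.eventually (eventually_gt_atTop a)] with z hz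
  exact hbound z hz

theorem closedBall_diff_ball_mem_nhds {c z : ℂ} {r R : ℝ} (hz : z ∈ ball c R \ closedBall c r) :
    closedBall c R \ ball c r ∈ 𝓝 z :=
  mem_of_superset ((isOpen_ball.sdiff isClosed_closedBall).mem_nhds hz)
    (sdiff_subset_sdiff ball_subset_closedBall ball_subset_closedBall)

theorem circleIntegral_eq_of_differentiableOn_annulus {g : ℂ → E} {c : ℂ} {r R : ℝ}
    (h0 : 0 < r) (hle : r ≤ R) (hg : DifferentiableOn ℂ g (closedBall c R \ ball c r)) :
    (∮ w in C(c, R), g w) = ∮ w in C(c, r), g w :=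
  circleIntegral_eq_of_differentiable_on_annulus_off_countable h0 hle countable_empty
    hg.continuousOn fun _ hw => hg.differentiableAt (closedBall_diff_ball_mem_nhds hw.1)

theorem circleIntegral_sub_inv_smul_eq_of_notMem_annulus {f : ℂ → E} {c z : ℂ} {r R : ℝ}
    (h0 : 0 < r) (hle : r ≤ R) (hf : DifferentiableOn ℂ f (closedBall c R \ ball c r))
    (hz : z ∉ closedBall c R \ ball c r) :
    (∮ w in C(c, R), (w - z)⁻¹ • f w) = ∮ w in C(c, r), (w - z)⁻¹ • f w :=
  circleIntegral_eq_of_differentiableOn_annulus h0 hle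
    (((differentiableOn_id.sub_const z).inv fun _ hw =>
      sub_ne_zero.2 (ne_of_mem_of_not_mem hw hz)).smul hf)

theorem circleIntegral_sub_inv_smul_annulus [CompleteSpace E] {f : ℂ → E} {c z : ℂ} {r R : ℝ}
    (h0 : 0 < r) (hz : z ∈ ball c R \ closedBall c r)
    (hf : DifferentiableOn ℂ f (closedBall c R \ ball c r)) :
    (∮ w in C(c, R), (w - z)⁻¹ • f w) - (∮ w in C(c, r), (w - z)⁻¹ • f w) =
      (2 * π * I) • f z := by
  have hzR : dist z c < R := hz.1
  have hzr : r < dist z c := not_le.1 hz.2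
  have hle : r ≤ R := by linarith
  have hsphere : ∀ t, r ≤ t → t ≤ R → sphere c t ⊆ closedBall c R \ ball c r :=
    fun t hrt htR w hw => ⟨sphere_subset_closedBall.trans (closedBall_subset_closedBall htR) hw,
      fun hw' => ((mem_ball.1 hw').trans_le hrt).ne (mem_sphere.1 hw)⟩
  -- `dslope f z` is holomorphic on the whole closed annulus, so its circle integrals agree
  have key := circleIntegral_eq_of_differentiableOn_annulus h0 hle
    ((differentiableOn_dslope (closedBall_diff_ball_mem_nhds hz)).2 hf)
  have expand : ∀ t, r ≤ t → t ≤ R → t ≠ dist z c → (∮ w in C(c, t), dslope f z w) =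
      (∮ w in C(c, t), (w - z)⁻¹ • f w) - (∮ w in C(c, t), (w - z)⁻¹) • f z := by
    intro t hrt htR ht
    have hne : ∀ w ∈ sphere c t, w - z ≠ 0 := fun w hw h => ht (by
      rw [sub_eq_zero.1 h] at hw; exact (mem_sphere.1 hw).symm)
    have hinv : ContinuousOn (fun w => (w - z)⁻¹) (sphere c t) :=
      (continuousOn_id.sub continuousOn_const).inv₀ hne
    have hint : CircleIntegrable (fun w => (w - z)⁻¹ • f w) c t :=
      (hinv.smul (hf.continuousOn.mono (hsphere t hrt htR))).circleIntegrable (h0.le.trans hrt)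
    have hint' : CircleIntegrable (fun w => (w - z)⁻¹ • f z) c t :=
      (hinv.smul continuousOn_const).circleIntegrable (h0.le.trans hrt)
    rw [← circleIntegral.integral_smul_const, ← circleIntegral.integral_sub hint hint']
    refine circleIntegral.integral_congr (h0.le.trans hrt) fun w hw => ?_
    rw [dslope_of_ne _ (sub_ne_zero.1 (hne w hw)), slope_def_module, smul_sub]
  have hR : (∮ w in C(c, R), (w - z)⁻¹) = 2 * π * I :=
    circleIntegral.integral_sub_inv_of_mem_ball hz.1
  have hr : (∮ w in C(c, r), (w - z)⁻¹) = 0 :=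
    (((differentiableOn_id.sub_const z).inv fun _ hw => sub_ne_zero.2 hw).diffContOnCl_ball
      (U := {z}ᶜ) fun _ hw h => hz.2 (h ▸ hw)).circleIntegral_eq_zero h0.le
  rw [expand R hle le_rfl hzR.ne', expand r le_rfl hle hzr.ne, hR, hr, zero_smul, sub_zero] at key
  rw [← key, sub_sub_cancel]

theorem eqOn_zero_of_eqOn_inter_of_tendsto_zero {U V : Set ℂ} (hU : IsOpen U) (hV : IsOpen V)
    (hUV : U ∪ V = univ) (hV_cobounded : V ∈ Bornology.cobounded ℂ) {u v : ℂ → E}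
    (hu : DifferentiableOn ℂ u U) (hv : DifferentiableOn ℂ v V) (huv : EqOn u v (U ∩ V))
    (hv_tendsto : Tendsto v (Bornology.cobounded ℂ) (𝓝 0)) : EqOn u 0 U ∧ EqOn v 0 V := by
  classical
  set F := V.piecewise v u
  have hFu : EqOn F u U := fun z hz => by
    by_cases hzV : z ∈ V
    · simp only [F, piecewise_eq_of_mem _ _ _ hzV, huv ⟨hz, hzV⟩]
    · exact piecewise_eq_of_notMem _ _ _ hzV
  have hFv : EqOn F v V := fun z hz => piecewise_eq_of_mem _ _ _ hz
  have hF : Differentiable ℂ F := fun z => by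
    rcases (Set.ext_iff.1 hUV z).2 trivial with hz | hz
    · exact (hu.differentiableAt (hU.mem_nhds hz)).congr_of_eventuallyEq
        (eventually_of_mem (hU.mem_nhds hz) hFu)
    · exact (hv.differentiableAt (hV.mem_nhds hz)).congr_of_eventuallyEq
        (eventually_of_mem (hV.mem_nhds hz) hFv)
  have hF0 : ∀ z, F z = 0 := fun z => hF.apply_eq_of_tendsto_cocompact z <| by
    rw [← cobounded_eq_cocompact]
    exact hv_tendsto.congr' (eventually_of_mem hV_cobounded fun z hz => (hFv hz).symm)
  exact ⟨fun z hz => (hFu hz).symm.trans (hF0 z), fun z hz => (hFv hz).symm.trans (hF0 z)⟩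

theorem ENNReal.exists_lt_ofReal_lt {a : ℝ} {b : ℝ≥0∞} (h : ENNReal.ofReal a < b) :
    ∃ t : ℝ, a < t ∧ ENNReal.ofReal t < b := by
  obtain ⟨t, -, hat, htb⟩ := ENNReal.lt_iff_exists_real_btwn.1 h
  exact ⟨t, (ENNReal.ofReal_lt_ofReal_iff'.1 hat).1, htb⟩

theorem Complex.mem_eball_zero_iff {z : ℂ} {r : ℝ≥0∞} :
    z ∈ eball (0 : ℂ) r ↔ ENNReal.ofReal ‖z‖ < r := by
  rw [mem_eball, edist_zero_right, ofReal_norm]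

noncomputable def circleCauchyIntegral (f : ℂ → E) (t : ℝ) (z : ℂ) : E :=
  (2 * π * I)⁻¹ • ∮ w in C(0, t), (w - z)⁻¹ • f w

theorem differentiableAt_circleCauchyIntegral {f : ℂ → E} {t : ℝ} {z : ℂ} (ht : 0 ≤ t)
    (hf : ContinuousOn f (sphere 0 t)) (hz : ‖z‖ ≠ t) :
    DifferentiableAt ℂ (circleCauchyIntegral f t) z :=
  ((hasDerivAt_circleIntegral_sub_inv_smul ht hf (by simpa using hz)).differentiableAt).const_smul _

section LaurentDecomposition

variable (f : ℂ → E) (ρ₀ : ℝ) (r : ℝ≥0∞)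

/- Both parts integrate over a circle inside the annulus `ρ₀ < ‖w‖ < r`, chosen by `ε` on the
appropriate side of `z`; `laurentRegularPart_eq` and `laurentPrincipalPart_eq` show that the
choice does not matter. Where no such circle exists (`r ≤ ‖z‖`, resp. `‖z‖ ≤ ρ₀`) the value is
junk. -/
noncomputable def laurentRegularPart (z : ℂ) : E :=
  circleCauchyIntegral f (Classical.epsilon fun R => ρ₀ < R ∧ ENNReal.ofReal R < r ∧ ‖z‖ < R) z

noncomputable def laurentPrincipalPart (z : ℂ) : E :=
  -circleCauchyIntegral f (Classical.epsilon fun ρ => ρ₀ < ρ ∧ ENNReal.ofReal ρ < r ∧ ρ < ‖z‖) z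

variable {f ρ₀ r}

theorem closedBall_diff_ball_subset_annulus {t₁ t₂ : ℝ} (h₁ : ρ₀ < t₁)
    (h₂ : ENNReal.ofReal t₂ < r) :
    closedBall (0 : ℂ) t₂ \ ball 0 t₁ ⊆ {z | ρ₀ < ‖z‖} ∩ eball 0 r := by
  rintro w ⟨hw₂, hw₁⟩
  rw [mem_closedBall_zero_iff] at hw₂
  rw [mem_ball_zero_iff, not_lt] at hw₁
  exact ⟨h₁.trans_le hw₁, mem_eball_zero_iff.2 ((ENNReal.ofReal_le_ofReal hw₂).trans_lt h₂)⟩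

theorem circleCauchyIntegral_congr_radius (hρ₀ : 0 ≤ ρ₀)
    (hf : DifferentiableOn ℂ f ({z | ρ₀ < ‖z‖} ∩ eball 0 r)) {t₁ t₂ : ℝ} {z : ℂ}
    (h₁ : ρ₀ < t₁) (h₁r : ENNReal.ofReal t₁ < r)
    (h₂ : ρ₀ < t₂) (h₂r : ENNReal.ofReal t₂ < r) (hz : ‖z‖ < min t₁ t₂ ∨ max t₁ t₂ < ‖z‖) :
    circleCauchyIntegral f t₁ z = circleCauchyIntegral f t₂ z := by
  wlog hle : t₁ ≤ t₂ generalizing t₁ t₂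
  · exact (this h₂ h₂r h₁ h₁r (by rwa [min_comm, max_comm]) (le_of_not_ge hle)).symm
  rw [min_eq_left hle, max_eq_right hle] at hz
  have hz' : z ∉ closedBall 0 t₂ \ ball 0 t₁ := by
    rintro ⟨hz₂, hz₁⟩
    rw [mem_closedBall_zero_iff] at hz₂
    rw [mem_ball_zero_iff, not_lt] at hz₁
    rcases hz with hz | hz <;> linarith
  simp only [circleCauchyIntegral]
  rw [circleIntegral_sub_inv_smul_eq_of_notMem_annulus (hρ₀.trans_lt h₁) hle
    (hf.mono (closedBall_diff_ball_subset_annulus h₁ h₂r)) hz']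

theorem laurentRegularPart_eq (hρ₀ : 0 ≤ ρ₀)
    (hf : DifferentiableOn ℂ f ({z | ρ₀ < ‖z‖} ∩ eball 0 r)) {R : ℝ} {z : ℂ} (hR : ρ₀ < R)
    (hRr : ENNReal.ofReal R < r) (hzR : ‖z‖ < R) :
    laurentRegularPart f ρ₀ r z = circleCauchyIntegral f R z := by
  obtain ⟨h₁, h₁r, hz₁⟩ := Classical.epsilon_spec
    (p := fun R => ρ₀ < R ∧ ENNReal.ofReal R < r ∧ ‖z‖ < R) ⟨R, hR, hRr, hzR⟩
  exact circleCauchyIntegral_congr_radius hρ₀ hf h₁ h₁r hR hRr (Or.inl (lt_min hz₁ hzR))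

theorem laurentPrincipalPart_eq (hρ₀ : 0 ≤ ρ₀)
    (hf : DifferentiableOn ℂ f ({z | ρ₀ < ‖z‖} ∩ eball 0 r)) {ρ : ℝ} {z : ℂ} (hρ : ρ₀ < ρ)
    (hρr : ENNReal.ofReal ρ < r) (hρz : ρ < ‖z‖) :
    laurentPrincipalPart f ρ₀ r z = -circleCauchyIntegral f ρ z := by
  obtain ⟨h₁, h₁r, hz₁⟩ := Classical.epsilon_spec
    (p := fun ρ => ρ₀ < ρ ∧ ENNReal.ofReal ρ < r ∧ ρ < ‖z‖) ⟨ρ, hρ, hρr, hρz⟩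
  rw [laurentPrincipalPart,
    circleCauchyIntegral_congr_radius hρ₀ hf h₁ h₁r hρ hρr (Or.inr (max_lt hz₁ hρz))]

theorem exists_radius_gt_norm (hρr : ENNReal.ofReal ρ₀ < r) {z : ℂ} (hz : z ∈ eball 0 r) :
    ∃ R, ρ₀ < R ∧ ENNReal.ofReal R < r ∧ ‖z‖ < R := by
  obtain ⟨R, hR, hRr⟩ := ENNReal.exists_lt_ofReal_lt (a := max ρ₀ ‖z‖)
    (by rw [ENNReal.ofReal_max]; exact max_lt hρr (mem_eball_zero_iff.1 hz))
  exact ⟨R, (le_max_left _ _).trans_lt hR, hRr, (le_max_right _ _).trans_lt hR⟩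

theorem exists_radius_lt_norm (hρ₀ : 0 ≤ ρ₀) (hρr : ENNReal.ofReal ρ₀ < r) {z : ℂ}
    (hz : ρ₀ < ‖z‖) : ∃ ρ, ρ₀ < ρ ∧ ENNReal.ofReal ρ < r ∧ ρ < ‖z‖ := by
  obtain ⟨ρ, hρ, hρr'⟩ := ENNReal.exists_lt_ofReal_lt (a := ρ₀) (b := min (ENNReal.ofReal ‖z‖) r)
    (lt_min ((ENNReal.ofReal_lt_ofReal_iff_of_nonneg hρ₀).2 hz) hρr)
  exact ⟨ρ, hρ, hρr'.trans_le (min_le_right _ _),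
    (ENNReal.ofReal_lt_ofReal_iff'.1 (hρr'.trans_le (min_le_left _ _))).1⟩

theorem continuousOn_sphere_of_annulus (hf : DifferentiableOn ℂ f ({z | ρ₀ < ‖z‖} ∩ eball 0 r))
    {t : ℝ} (ht : ρ₀ < t) (htr : ENNReal.ofReal t < r) : ContinuousOn f (sphere 0 t) :=
  hf.continuousOn.mono fun _ hw => closedBall_diff_ball_subset_annulus ht htr
    ⟨sphere_subset_closedBall hw, fun h => (mem_ball.1 h).ne (mem_sphere.1 hw)⟩

theorem differentiableOn_laurentRegularPart (hρ₀ : 0 ≤ ρ₀) (hρr : ENNReal.ofReal ρ₀ < r)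
    (hf : DifferentiableOn ℂ f ({z | ρ₀ < ‖z‖} ∩ eball 0 r)) :
    DifferentiableOn ℂ (laurentRegularPart f ρ₀ r) (eball 0 r) := by
  intro z₀ hz₀
  obtain ⟨R, hR, hRr, hz₀R⟩ := exists_radius_gt_norm hρr hz₀
  have heq : laurentRegularPart f ρ₀ r =ᶠ[𝓝 z₀] circleCauchyIntegral f R :=
    eventually_of_mem (isOpen_lt continuous_norm continuous_const |>.mem_nhds hz₀R)
      fun z hz => laurentRegularPart_eq hρ₀ hf hR hRr hz
  have hdiff : DifferentiableAt ℂ (circleCauchyIntegral f R) z₀ :=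
    differentiableAt_circleCauchyIntegral (hρ₀.trans hR.le)
      (continuousOn_sphere_of_annulus hf hR hRr) hz₀R.ne
  exact (hdiff.congr_of_eventuallyEq heq).differentiableWithinAt

theorem differentiableOn_laurentPrincipalPart (hρ₀ : 0 ≤ ρ₀) (hρr : ENNReal.ofReal ρ₀ < r)
    (hf : DifferentiableOn ℂ f ({z | ρ₀ < ‖z‖} ∩ eball 0 r)) :
    DifferentiableOn ℂ (laurentPrincipalPart f ρ₀ r) {z | ρ₀ < ‖z‖} := by
  intro z₀ hz₀
  obtain ⟨ρ, hρ, hρr', hρz₀⟩ := exists_radius_lt_norm hρ₀ hρr hz₀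
  have heq : laurentPrincipalPart f ρ₀ r =ᶠ[𝓝 z₀] -circleCauchyIntegral f ρ :=
    eventually_of_mem (isOpen_lt continuous_const continuous_norm |>.mem_nhds hρz₀)
      fun z hz => laurentPrincipalPart_eq hρ₀ hf hρ hρr' hz
  have hdiff : DifferentiableAt ℂ (-circleCauchyIntegral f ρ) z₀ :=
    (differentiableAt_circleCauchyIntegral (hρ₀.trans hρ.le)
      (continuousOn_sphere_of_annulus hf hρ hρr') hρz₀.ne').neg
  exact (hdiff.congr_of_eventuallyEq heq).differentiableWithinAt

theorem tendsto_laurentPrincipalPart_cobounded (hρ₀ : 0 ≤ ρ₀) (hρr : ENNReal.ofReal ρ₀ < r)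
    (hf : DifferentiableOn ℂ f ({z | ρ₀ < ‖z‖} ∩ eball 0 r)) :
    Tendsto (laurentPrincipalPart f ρ₀ r) (Bornology.cobounded ℂ) (𝓝 0) := by
  obtain ⟨ρ, hρ, hρr'⟩ := ENNReal.exists_lt_ofReal_lt hρr
  have hlim := ((tendsto_circleIntegral_sub_inv_smul_cobounded (hρ₀.trans hρ.le)
    (continuousOn_sphere_of_annulus hf hρ hρr')).const_smul (2 * π * I)⁻¹).neg
  rw [smul_zero, neg_zero] at hlim
  refine hlim.congr' ?_
  filter_upwards [tendsto_norm_cobounded_atTop.eventually (eventually_gt_atTop ρ)] with z hz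
  exact (laurentPrincipalPart_eq hρ₀ hf hρ hρr' hz).symm

theorem laurentRegularPart_add_laurentPrincipalPart [CompleteSpace E] (hρ₀ : 0 ≤ ρ₀)
    (hf : DifferentiableOn ℂ f ({z | ρ₀ < ‖z‖} ∩ eball 0 r)) {z : ℂ}
    (hz : z ∈ {z | ρ₀ < ‖z‖} ∩ eball 0 r) :
    laurentRegularPart f ρ₀ r z + laurentPrincipalPart f ρ₀ r z = f z := by
  have hρr : ENNReal.ofReal ρ₀ < r :=
    (ENNReal.ofReal_le_ofReal hz.1.le).trans_lt (mem_eball_zero_iff.1 hz.2)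
  obtain ⟨R, hR, hRr, hzR⟩ := exists_radius_gt_norm hρr hz.2
  obtain ⟨ρ, hρ, hρr, hρz⟩ := exists_radius_lt_norm hρ₀ hρr hz.1
  rw [laurentRegularPart_eq hρ₀ hf hR hRr hzR, laurentPrincipalPart_eq hρ₀ hf hρ hρr hρz,
    circleCauchyIntegral, circleCauchyIntegral, ← sub_eq_add_neg, ← smul_sub,
    circleIntegral_sub_inv_smul_annulus (hρ₀.trans_lt hρ) ⟨mem_ball_zero_iff.2 hzR, ?_⟩
      (hf.mono (closedBall_diff_ball_subset_annulus hρ hRr)),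
    inv_smul_smul₀ two_pi_I_ne_zero]
  rw [mem_closedBall_zero_iff, not_le]
  exact hρz

theorem laurent_decomposition_unique (hρr : ENNReal.ofReal ρ₀ < r) {g₁ g₂ h₁ h₂ : ℂ → E}
    (hg₁ : DifferentiableOn ℂ g₁ (eball 0 r)) (hg₂ : DifferentiableOn ℂ g₂ (eball 0 r))
    (hh₁ : DifferentiableOn ℂ h₁ {z | ρ₀ < ‖z‖}) (hh₂ : DifferentiableOn ℂ h₂ {z | ρ₀ < ‖z‖})
    (hh₁_tendsto : Tendsto h₁ (Bornology.cobounded ℂ) (𝓝 0))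
    (hh₂_tendsto : Tendsto h₂ (Bornology.cobounded ℂ) (𝓝 0))
    (heq : ∀ z ∈ {z | ρ₀ < ‖z‖} ∩ eball 0 r, g₁ z + h₁ z = g₂ z + h₂ z) :
    EqOn g₁ g₂ (eball 0 r) ∧ EqOn h₁ h₂ {z | ρ₀ < ‖z‖} := by
  have hcover : eball 0 r ∪ {z : ℂ | ρ₀ < ‖z‖} = univ := eq_univ_of_forall fun z => by
    by_cases hz : ρ₀ < ‖z‖
    · exact Or.inr hz
    · exact Or.inl (mem_eball_zero_iff.2 ((ENNReal.ofReal_le_ofReal (not_lt.1 hz)).trans_lt hρr))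
  obtain ⟨hg, hh⟩ := eqOn_zero_of_eqOn_inter_of_tendsto_zero isOpen_eball
    (isOpen_lt continuous_const continuous_norm) hcover
    (tendsto_norm_cobounded_atTop.eventually (eventually_gt_atTop ρ₀)) (hg₁.sub hg₂) (hh₂.sub hh₁)
    (fun z hz => sub_eq_sub_iff_add_eq_add.2 ((heq z ⟨hz.2, hz.1⟩).trans (add_comm _ _)))
    (sub_zero (0 : E) ▸ hh₂_tendsto.sub hh₁_tendsto)
  exact ⟨fun z hz => sub_eq_zero.1 (hg hz), fun z hz => (sub_eq_zero.1 (hh hz)).symm⟩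

end LaurentDecomposition

/-- Decomposition `O(𝔻 − 0) = O(𝔻) ⊕ ℂ{z⁻¹}`: a function holomorphic on the punctured
disk of radius `r` (with `0 < r ≤ ∞`) decomposes uniquely as `g + h`, where `g` is
holomorphic on the full disk and `h` is holomorphic on `ℂ ∖ {0}` and tends to `0` at
infinity. -/
theorem punctured_disk_decomposition (r : ENNReal) (hr : 0 < r) (f : ℂ → ℂ)
    (hf : DifferentiableOn ℂ f ({z : ℂ | (‖z‖₊ : ENNReal) < r} \ {0})) :
    ∃ g h : ℂ → ℂ,
      DifferentiableOn ℂ g {z : ℂ | (‖z‖₊ : ENNReal) < r} ∧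
      DifferentiableOn ℂ h {(0 : ℂ)}ᶜ ∧
      Tendsto h (Bornology.cobounded ℂ) (nhds 0) ∧
      (∀ z ∈ {z : ℂ | (‖z‖₊ : ENNReal) < r} \ {0}, f z = g z + h z) ∧
      (∀ g' h' : ℂ → ℂ,
        DifferentiableOn ℂ g' {z : ℂ | (‖z‖₊ : ENNReal) < r} →
        DifferentiableOn ℂ h' {(0 : ℂ)}ᶜ →
        Tendsto h' (Bornology.cobounded ℂ) (nhds 0) →
        (∀ z ∈ {z : ℂ | (‖z‖₊ : ENNReal) < r} \ {0}, f z = g' z + h' z) →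
        (EqOn g g' {z : ℂ | (‖z‖₊ : ENNReal) < r} ∧ EqOn h h' {(0 : ℂ)}ᶜ)) := by
  have hpunct : {z : ℂ | (‖z‖₊ : ENNReal) < r} \ {0} = {z : ℂ | 0 < ‖z‖} ∩ eball 0 r := by
    ext; simp [and_comm, enorm_eq_nnnorm]
  have hdisk : {z : ℂ | (‖z‖₊ : ENNReal) < r} = eball 0 r := by ext; simp [enorm_eq_nnnorm]
  have hcompl : {(0 : ℂ)}ᶜ = {z : ℂ | 0 < ‖z‖} := by ext; simp
  have h0r : ENNReal.ofReal 0 < r := by rwa [ENNReal.ofReal_zero]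
  rw [hpunct] at hf ⊢
  rw [hdisk, hcompl]
  have hg := differentiableOn_laurentRegularPart le_rfl h0r hf
  have hh := differentiableOn_laurentPrincipalPart le_rfl h0r hf
  have hh_tendsto := tendsto_laurentPrincipalPart_cobounded le_rfl h0r hf
  have hfgh : ∀ z ∈ {z : ℂ | 0 < ‖z‖} ∩ eball 0 r,
      f z = laurentRegularPart f 0 r z + laurentPrincipalPart f 0 r z :=
    fun z hz => (laurentRegularPart_add_laurentPrincipalPart le_rfl hf hz).symm
  refine ⟨_, _, hg, hh, hh_tendsto, hfgh, fun g' h' hg' hh' hh'_tendsto hfgh' => ?_⟩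
  exact laurent_decomposition_unique h0r hg hg' hh hh' hh_tendsto hh'_tendsto
    fun z hz => (hfgh z hz).symm.trans (hfgh' z hz)
end

section
/- For n ≥ 2, every function holomorphic on ℂⁿ ∖ {0} extends to a holomorphic function on all of ℂⁿ. -/
/-!
Write `ℂⁿ = ℂ × ℂⁿ⁻¹` and take the Cauchy integral in the first variable,
`F (z, v) = (2πi)⁻¹ ∮_{|w| = 1} f (w, v) / (w - z) dw`. The circle `|w| = 1` stays away from the
puncture, so `F` is holomorphic on `|z| < 1` by differentiation under the integral sign, with the
derivatives of the integrand bounded uniformly by Cauchy estimates near a compact set. For `v ≠ 0`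
the whole disc `{(w, v) : |w| ≤ 1}` avoids the puncture and the one-variable Cauchy formula gives
`F = f`; since `n ≥ 2` such points are dense, `F = f` on `|z| < 1` away from the origin, and `F`
fills in the puncture.
-/

open Complex Metric Set Function MeasureTheory
open scoped Real Topology

section CauchyEstimate

variable {E F : Type*} [NormedAddCommGroup E] [NormedSpace ℂ E] [NormedAddCommGroup F]
  [NormedSpace ℂ F]

theorem IsCompact.exists_thickening_norm_fderiv_le {g : E → F} {U K : Set E} (hK : IsCompact K)
    (hU : IsOpen U) (hKU : K ⊆ U) (hg : DifferentiableOn ℂ g U) :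
    ∃ ε > 0, ∃ C, thickening ε K ⊆ U ∧ ∀ p ∈ thickening ε K, ‖fderiv ℂ g p‖ ≤ C := by
  obtain ⟨M, hM⟩ := hK.exists_bound_of_continuousOn (hg.continuousOn.mono hKU)
  set V := U ∩ g ⁻¹' ball 0 (M + 1)
  have hV : IsOpen V := hg.continuousOn.isOpen_inter_preimage hU isOpen_ball
  have hKV : K ⊆ V := fun p hp => ⟨hKU hp, by simpa using (hM p hp).trans_lt (lt_add_one M)⟩
  obtain ⟨δ, hδ, hδV⟩ := hK.exists_thickening_subset_open hV hKV
  refine ⟨δ / 2, half_pos hδ, 2 * (M + 1) / (δ / 2),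
    (thickening_mono (half_le_self hδ.le) K).trans (hδV.trans inter_subset_left), fun p hp => ?_⟩
  have hball : ball p (δ / 2) ⊆ V := by
    calc ball p (δ / 2) ⊆ thickening (δ / 2) (thickening (δ / 2) K) := ball_subset_thickening hp _
      _ ⊆ thickening (δ / 2 + δ / 2) K := thickening_thickening_subset _ _ _
      _ ⊆ V := by rwa [add_halves]
  have hsmall : ∀ q ∈ ball p (δ / 2), ‖g q‖ < M + 1 := fun q hq => by
    simpa using (hball hq).2
  refine norm_fderiv_le_div_of_mapsTo_ball (hg.mono (hball.trans inter_subset_left))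
    (fun q hq => ?_) (half_pos hδ)
  have hp' := hsmall p (mem_ball_self (half_pos hδ))
  rw [mem_closedBall, dist_eq_norm, two_mul]
  exact (norm_sub_le _ _).trans (add_le_add (hsmall q hq).le hp'.le)

end CauchyEstimate

section ParametricCircleIntegral

variable {H F : Type*} [NormedAddCommGroup H] [NormedSpace ℂ H] [FiniteDimensional ℂ H]
  [NormedAddCommGroup F] [NormedSpace ℂ F] [CompleteSpace F] [SecondCountableTopology F]

theorem differentiableAt_circleIntegral_of_differentiableOn {g : H × ℂ → F} {U : Set (H × ℂ)}
    (hU : IsOpen U) (hg : DifferentiableOn ℂ g U) {c : ℂ} {R : ℝ} {x₀ : H}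
    (hx₀ : ∀ w ∈ sphere c |R|, (x₀, w) ∈ U) :
    DifferentiableAt ℂ (fun x => ∮ w in C(c, R), g (x, w)) x₀ := by
  -- `fderiv ℂ g` is only known to be Borel measurable; this suffices because `H →L[ℂ] F` is
  -- second countable.
  borelize (H × ℂ)
  have hK : IsCompact ({x₀} ×ˢ sphere c |R|) := isCompact_singleton.prod (isCompact_sphere c |R|)
  have hKU : {x₀} ×ˢ sphere c |R| ⊆ U := by
    rintro ⟨x, w⟩ ⟨rfl, hw⟩
    exact hx₀ w hw
  obtain ⟨ε, hε, C, hεU, hC⟩ := hK.exists_thickening_norm_fderiv_le hU hKU hg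
  have hnear : ∀ x ∈ ball x₀ ε, ∀ θ, (x, circleMap c R θ) ∈ thickening ε ({x₀} ×ˢ sphere c |R|) :=
    fun x hx θ => mem_thickening_iff.mpr ⟨(x₀, circleMap c R θ),
      ⟨rfl, circleMap_mem_sphere' c R θ⟩, by simpa [Prod.dist_eq] using hx⟩
  have hderiv_cont : Continuous (deriv (circleMap c R)) :=
    (contDiff_circleMap c R).continuous_deriv le_rfl
  have hint_cont : ∀ x ∈ ball x₀ ε,
      Continuous fun θ => deriv (circleMap c R) θ • g (x, circleMap c R θ) := fun x hx =>
    hderiv_cont.smul (hg.continuousOn.comp_continuous (by fun_prop) fun θ => hεU (hnear x hx θ))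
  refine (intervalIntegral.hasFDerivAt_integral_of_dominated_of_fderiv_le
    (F' := fun x θ => deriv (circleMap c R) θ •
      (fderiv ℂ g (x, circleMap c R θ)).comp (ContinuousLinearMap.inl ℂ H ℂ))
    (bound := fun _ => |R| * C) (ball_mem_nhds x₀ hε) ?_ ?_ ?_ ?_ intervalIntegrable_const
      ?_).differentiableAt
  · filter_upwards [ball_mem_nhds x₀ hε] with x hx
    exact (hint_cont x hx).aestronglyMeasurable
  · exact (hint_cont x₀ (mem_ball_self hε)).intervalIntegrable _ _
  · have hrestrict : Continuous fun A : (H × ℂ) →L[ℂ] F => A.comp (ContinuousLinearMap.inl ℂ H ℂ) :=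
      ((ContinuousLinearMap.compL ℂ H (H × ℂ) F).flip (ContinuousLinearMap.inl ℂ H ℂ)).continuous
    exact hderiv_cont.aestronglyMeasurable.smul
      (hrestrict.measurable.comp ((measurable_fderiv ℂ g).comp (by fun_prop))).aestronglyMeasurable
  · refine ae_of_all _ fun θ _ x hx => ?_
    have hA := hC _ (hnear x hx θ)
    calc _ = |R| * ‖(fderiv ℂ g (x, circleMap c R θ)).comp (ContinuousLinearMap.inl ℂ H ℂ)‖ := by
          simp [norm_smul]
      _ ≤ |R| * C := by
          gcongr
          refine (ContinuousLinearMap.opNorm_comp_le _ _).trans (le_trans ?_ hA)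
          exact mul_le_of_le_one_right (norm_nonneg _) (ContinuousLinearMap.norm_inl_le_one _ _ _)
  · refine ae_of_all _ fun θ _ x hx => ?_
    exact ((hg.differentiableAt (hU.mem_nhds (hεU (hnear x hx θ)))).hasFDerivAt.comp x
      (hasFDerivAt_prodMk_left x _)).const_smul _

end ParametricCircleIntegral

section Update

variable {𝕜 X Y : Type*} [NontriviallyNormedField 𝕜] [NormedAddCommGroup X] [NormedSpace 𝕜 X]
  [NormedAddCommGroup Y] [NormedSpace 𝕜 Y]

theorem differentiable_update_of_eqOn [DecidableEq X] {f h : X → Y} {a : X} {U : Set X}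
    (hf : DifferentiableOn 𝕜 f {a}ᶜ) (hU : U ∈ 𝓝 a) (hh : DifferentiableOn 𝕜 h U)
    (hfh : EqOn h f (U \ {a})) : Differentiable 𝕜 (update f a (h a)) := by
  intro x
  rcases eq_or_ne x a with rfl | hx
  · refine (hh.differentiableAt hU).congr_of_eventuallyEq ?_
    filter_upwards [hU] with y hy
    rcases eq_or_ne y x with rfl | hyx
    · exact update_self ..
    · rw [update_of_ne hyx]
      exact (hfh ⟨hy, hyx⟩).symm
  · refine (hf.differentiableAt (isOpen_compl_singleton.mem_nhds hx)).congr_of_eventuallyEq ?_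
    filter_upwards [isOpen_compl_singleton.mem_nhds hx] with y hy
    exact update_of_ne hy ..

end Update

section Hartogs

variable {E F : Type*} [NormedAddCommGroup E] [NormedSpace ℂ E] [NormedAddCommGroup F]
  [NormedSpace ℂ F] [CompleteSpace F] {f : ℂ × E → F}

noncomputable def cauchyIntegralFst (f : ℂ × E → F) (R : ℝ) (p : ℂ × E) : F :=
  (2 * π * I : ℂ)⁻¹ • ∮ w in C(0, R), (w - p.1)⁻¹ • f (w, p.2)

theorem differentiableOn_cauchyIntegralFst [FiniteDimensional ℂ E]
    [SecondCountableTopology F] (hf : DifferentiableOn ℂ f {0}ᶜ) (R : ℝ) :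
    DifferentiableOn ℂ (cauchyIntegralFst f R) {p | ‖p.1‖ < R} := by
  set U : Set ((ℂ × E) × ℂ) := {q | q.2 - q.1.1 ≠ 0 ∧ (q.2, q.1.2) ≠ 0}
  have hU : IsOpen U :=
    (isOpen_ne_fun (by fun_prop) continuous_const).inter
      (isOpen_ne_fun (by fun_prop) continuous_const)
  have hg : DifferentiableOn ℂ (fun q : (ℂ × E) × ℂ => (q.2 - q.1.1)⁻¹ • f (q.2, q.1.2)) U :=
    fun q hq => ((differentiableAt_inv hq.1).comp q (by fun_prop)).smul
      ((hf.differentiableAt (isOpen_compl_singleton.mem_nhds hq.2)).comp q (by fun_prop))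
      |>.differentiableWithinAt
  intro p hp
  refine ((differentiableAt_circleIntegral_of_differentiableOn hU hg fun w hw => ?_).const_smul
    _).differentiableWithinAt
  have hR : ‖p.1‖ < ‖w‖ := by
    rw [mem_sphere_zero_iff_norm.mp hw]
    exact hp.trans_le (le_abs_self R)
  refine ⟨sub_ne_zero.mpr fun (h : w = p.1) => hR.ne (by rw [h]), fun h => ?_⟩
  have hw₀ : w = 0 := congrArg Prod.fst h
  rw [hw₀, norm_zero] at hR
  exact (norm_nonneg _).not_gt hR

theorem cauchyIntegralFst_eq_of_snd_ne_zero (hf : DifferentiableOn ℂ f {0}ᶜ) {R : ℝ}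
    {p : ℂ × E} (hp : ‖p.1‖ < R) (hp₂ : p.2 ≠ 0) : cauchyIntegralFst f R p = f p := by
  have hline : Differentiable ℂ fun w => f (w, p.2) := fun w =>
    have hw : (w, p.2) ≠ 0 := fun h => hp₂ (Prod.mk_eq_zero.mp h).2
    (hf.differentiableAt (isOpen_compl_singleton.mem_nhds hw)).comp w (by fun_prop)
  exact hline.diffContOnCl.two_pi_i_inv_smul_circleIntegral_sub_inv_smul
    (mem_ball_zero_iff.mpr hp)

theorem cauchyIntegralFst_eq [FiniteDimensional ℂ E] [Nontrivial E]
    [SecondCountableTopology F] (hf : DifferentiableOn ℂ f {0}ᶜ) {R : ℝ}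
    {p : ℂ × E} (hp : ‖p.1‖ < R) (hp₀ : p ≠ 0) : cauchyIntegralFst f R p = f p := by
  set W : Set (ℂ × E) := {p | ‖p.1‖ < R} ∩ {0}ᶜ
  have hW : IsOpen W := (isOpen_lt (by fun_prop) continuous_const).inter isOpen_compl_singleton
  have hdense : Dense (Prod.snd ⁻¹' {(0 : E)}ᶜ : Set (ℂ × E)) :=
    (dense_compl_singleton 0).preimage isOpenMap_snd
  refine EqOn.of_subset_closure (s := W ∩ Prod.snd ⁻¹' {0}ᶜ)
    (fun q hq => cauchyIntegralFst_eq_of_snd_ne_zero hf hq.1.1 hq.2)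
    ((differentiableOn_cauchyIntegralFst hf R).continuousOn.mono inter_subset_left)
    (hf.continuousOn.mono inter_subset_right) inter_subset_left
    (hdense.open_subset_closure_inter hW) ⟨hp, hp₀⟩

theorem exists_differentiable_extension_prod [FiniteDimensional ℂ E] [Nontrivial E]
    [SecondCountableTopology F] (hf : DifferentiableOn ℂ f {0}ᶜ) :
    ∃ g : ℂ × E → F, Differentiable ℂ g ∧ ∀ p ≠ 0, g p = f p := by
  classical
  have hU : {p : ℂ × E | ‖p.1‖ < 1} ∈ 𝓝 0 :=
    (isOpen_lt (by fun_prop) continuous_const).mem_nhds (by simp)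
  exact ⟨update f 0 (cauchyIntegralFst f 1 0),
    differentiable_update_of_eqOn hf hU (differentiableOn_cauchyIntegralFst hf 1)
      fun _ hp => cauchyIntegralFst_eq hf hp.1 hp.2,
    fun _ hp => update_of_ne hp ..⟩

end Hartogs

/-- Hartogs' extension theorem for a single puncture: for `n ≥ 2`, every function
holomorphic on `ℂⁿ ∖ {0}` extends to a holomorphic function on all of `ℂⁿ`. -/
theorem hartogs_extension_puncture (n : ℕ) (hn : 2 ≤ n) (f : (Fin n → ℂ) → ℂ)
    (hf : DifferentiableOn ℂ f {(0 : Fin n → ℂ)}ᶜ) :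
    ∃ F : (Fin n → ℂ) → ℂ, Differentiable ℂ F ∧ ∀ z : Fin n → ℂ, z ≠ 0 → F z = f z := by
  obtain ⟨m, rfl⟩ : ∃ m, n = m + 2 := ⟨n - 2, by omega⟩
  let e : (ℂ × (Fin (m + 1) → ℂ)) ≃L[ℂ] (Fin (m + 2) → ℂ) := Fin.consEquivL ℂ fun _ => ℂ
  obtain ⟨g, hg, hgf⟩ := exists_differentiable_extension_prod (f := f ∘ e)
    (hf.comp e.differentiableOn fun _ hp => e.map_ne_zero_iff.mpr hp)
  exact ⟨g ∘ e.symm, hg.comp e.symm.differentiable, fun z hz => by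
    simpa using hgf (e.symm z) (e.symm.map_ne_zero_iff.mpr hz)⟩
end

section
/- Let n ≥ 2, let U ⊆ ℂⁿ be open and connected, and let S ⊂ U be a finite set. Then every function holomorphic on U ∖ S extends uniquely to a holomorphic function on U. -/
/-!
Near a point `c` of `S`, fix a coordinate `i` and put
`g x = (2πi)⁻¹ ∮_{|z - cᵢ| = R} f (x with xᵢ := z) / (z - xᵢ) dz`.
For `x` close to `c` the circle of integration stays away from `c`, so `g` is holomorphic on a
whole ball around `c` (differentiate under the integral sign; the Schwarz lemma bounds the
derivative of the integrand). If some other coordinate `xⱼ` differs from `cⱼ` (this is where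
`n ≥ 2` enters), the whole disc of integration avoids `c` and Cauchy's formula gives `g x = f x`;
such `x` are dense, so `g = f` on the punctured ball. Removing the points of `S` one at a time
gives the extension, and it is unique because `U \ S` is dense in `U`.
-/

open Set Metric Function Filter Topology MeasureTheory

theorem IsCompact.exists_closedBall_prod_subset {X Y : Type*} [PseudoMetricSpace X]
    [TopologicalSpace Y] {t : Set Y} (ht : IsCompact t) {V : Set (X × Y)} (hV : IsOpen V)
    {x₀ : X} (h : {x₀} ×ˢ t ⊆ V) : ∃ ε > 0, closedBall x₀ ε ×ˢ t ⊆ V := by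
  obtain ⟨u, v, hu, -, hxu, htv, huv⟩ := generalized_tube_lemma isCompact_singleton ht hV h
  obtain ⟨δ, hδ, hball⟩ := Metric.isOpen_iff.1 hu x₀ (hxu rfl)
  exact ⟨δ / 2, half_pos hδ,
    (prod_mono ((closedBall_subset_ball (half_lt_self hδ)).trans hball) htv).trans huv⟩

theorem norm_fderiv_le_of_forall_norm_le {E F : Type*} [NormedAddCommGroup E]
    [NormedSpace ℂ E] [NormedAddCommGroup F] [NormedSpace ℂ F] {h : E → F} {x : E} {r M : ℝ}
    (hr : 0 < r) (hd : DifferentiableOn ℂ h (ball x r)) (hM : ∀ y ∈ ball x r, ‖h y‖ ≤ M) :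
    ‖fderiv ℂ h x‖ ≤ 2 * M / r := by
  refine Complex.norm_fderiv_le_div_of_mapsTo_ball hd (fun y hy => ?_) hr
  rw [mem_closedBall, dist_eq_norm, two_mul]
  exact (norm_sub_le _ _).trans (add_le_add (hM y hy) (hM x (mem_ball_self hr)))

theorem measurable_fderiv_comp_inl {E : Type*} [NormedAddCommGroup E] [NormedSpace ℂ E]
    [FiniteDimensional ℂ E] [MeasurableSpace E] [BorelSpace E] (G : E × ℂ → ℂ) :
    Measurable fun p => (fderiv ℂ G p).comp (ContinuousLinearMap.inl ℂ E ℂ) :=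
  ((ContinuousLinearMap.compL ℂ E (E × ℂ) ℂ).flip
    (ContinuousLinearMap.inl ℂ E ℂ)).continuous.measurable.comp (measurable_fderiv ℂ G)

section CircleIntegral

variable {E : Type*} [NormedAddCommGroup E] [NormedSpace ℂ E] [FiniteDimensional ℂ E]
  {G : E × ℂ → ℂ} {V : Set (E × ℂ)} {x₀ : E} {c : ℂ} {R : ℝ}

theorem differentiableAt_circleIntegral_of_norm_le (hV : IsOpen V)
    (hG : DifferentiableOn ℂ G V) (hR : 0 ≤ R) {ε M : ℝ} (hε : 0 < ε)
    (hεV : closedBall x₀ ε ×ˢ sphere c R ⊆ V)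
    (hM : ∀ p ∈ closedBall x₀ ε ×ˢ sphere c R, ‖G p‖ ≤ M) :
    DifferentiableAt ℂ (fun x => ∮ z in C(c, R), G (x, z)) x₀ := by
  have hmem : ∀ x ∈ closedBall x₀ ε, ∀ θ, (x, circleMap c R θ) ∈ V :=
    fun x hx θ => hεV ⟨hx, circleMap_mem_sphere c hR θ⟩
  have hpartial : ∀ x ∈ closedBall x₀ ε, ∀ θ,
      HasFDerivAt (fun y => G (y, circleMap c R θ))
        ((fderiv ℂ G (x, circleMap c R θ)).comp (ContinuousLinearMap.inl ℂ E ℂ)) x :=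
    fun x hx θ => ((hG.differentiableAt (hV.mem_nhds (hmem x hx θ))).hasFDerivAt).comp x
      (hasFDerivAt_prodMk_left x _)
  have hderiv : Continuous (deriv (circleMap c R)) :=
    (contDiff_circleMap c R (n := 1)).continuous_deriv le_rfl
  have hcont : ∀ x ∈ closedBall x₀ ε, Continuous fun θ => G (x, circleMap c R θ) := fun x hx =>
    hG.continuousOn.comp_continuous (by fun_prop) (hmem x hx)
  have hbound : ∀ x ∈ ball x₀ (ε / 2), ∀ θ,
      ‖fderiv ℂ (fun y => G (y, circleMap c R θ)) x‖ ≤ 2 * M / (ε / 2) := by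
    intro x hx θ
    have hsub : ball x (ε / 2) ⊆ closedBall x₀ ε :=
      (ball_subset_ball' (by rw [mem_ball] at hx; linarith)).trans ball_subset_closedBall
    exact norm_fderiv_le_of_forall_norm_le (half_pos hε)
      (fun y hy => (hpartial y (hsub hy) θ).differentiableAt.differentiableWithinAt)
      (fun y hy => hM _ ⟨hsub hy, circleMap_mem_sphere c hR θ⟩)
  have key := intervalIntegral.hasFDerivAt_integral_of_dominated_of_fderiv_le
    (F := fun x θ => deriv (circleMap c R) θ • G (x, circleMap c R θ))
    (F' := fun x θ => deriv (circleMap c R) θ • fderiv ℂ (fun y => G (y, circleMap c R θ)) x)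
    (bound := fun _ => |R| * (2 * M / (ε / 2))) (μ := volume) (a := 0) (b := 2 * Real.pi)
    (ball_mem_nhds x₀ (half_pos hε)) ?meas ?int ?meas' ?bound intervalIntegrable_const ?diff
  · exact key.differentiableAt
  case meas =>
    filter_upwards [ball_mem_nhds x₀ hε] with x hx
    exact (hderiv.smul (hcont x (ball_subset_closedBall hx))).aestronglyMeasurable
  case int =>
    exact (hderiv.smul (hcont x₀ (mem_closedBall_self hε.le))).intervalIntegrable _ _
  case meas' =>
    borelize E
    refine hderiv.aestronglyMeasurable.smul
      (((measurable_fderiv_comp_inl G).comp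
        (by fun_prop : Measurable fun θ => (x₀, circleMap c R θ))).aestronglyMeasurable.congr
        (Eventually.of_forall fun θ => ?_))
    exact ((hpartial x₀ (mem_closedBall_self hε.le) θ).fderiv).symm
  case bound =>
    refine Eventually.of_forall fun θ _ x hx => ?_
    rw [norm_smul, deriv_circleMap, norm_mul, norm_circleMap_zero, Complex.norm_I, mul_one]
    exact mul_le_mul_of_nonneg_left (hbound x hx θ) (abs_nonneg R)
  case diff =>
    refine Eventually.of_forall fun θ _ x hx => ?_
    have hx' : x ∈ closedBall x₀ ε :=
      ball_subset_closedBall (ball_subset_ball (half_le_self hε.le) hx)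
    rw [(hpartial x hx' θ).fderiv]
    exact (hpartial x hx' θ).fun_const_smul _

theorem differentiableAt_circleIntegral_of_differentiableOn_s5 (hV : IsOpen V)
    (hG : DifferentiableOn ℂ G V) (hR : 0 ≤ R) (hx₀ : ∀ z ∈ sphere c R, (x₀, z) ∈ V) :
    DifferentiableAt ℂ (fun x => ∮ z in C(c, R), G (x, z)) x₀ := by
  obtain ⟨ε, hε, hεV⟩ := (isCompact_sphere c R).exists_closedBall_prod_subset hV
    (by rintro ⟨x, z⟩ ⟨rfl, hz⟩; exact hx₀ z hz)
  obtain ⟨M, hM⟩ := ((isCompact_closedBall x₀ ε).prod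
    (isCompact_sphere c R)).exists_bound_of_continuousOn (hG.continuousOn.mono hεV)
  exact differentiableAt_circleIntegral_of_norm_le hV hG hR hε hεV hM

end CircleIntegral

section Coordinate

variable {ι : Type*} [DecidableEq ι]

theorem differentiable_update [Fintype ι] {𝕜 : Type*} [NontriviallyNormedField 𝕜] (i : ι) :
    Differentiable 𝕜 fun p : (ι → 𝕜) × 𝕜 => update p.1 i p.2 := by
  refine differentiable_pi.2 fun j => ?_
  by_cases hj : j = i
  · subst hj
    simp only [update_self]
    exact differentiable_snd
  · simp only [update_of_ne hj]
    fun_prop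

theorem dist_update_le [Fintype ι] {α : Type*} [PseudoMetricSpace α] {x c : ι → α} {i : ι}
    {z : α} {R : ℝ} (hx : dist x c ≤ R) (hz : dist z (c i) ≤ R) :
    dist (update x i z) c ≤ R := by
  refine (dist_pi_le_iff (dist_nonneg.trans hx)).2 fun k => ?_
  rcases eq_or_ne k i with rfl | hk
  · rwa [update_self]
  · rw [update_of_ne hk]
    exact (dist_le_pi_dist x c k).trans hx

noncomputable def coordCauchyIntegral (f : (ι → ℂ) → ℂ) (i : ι) (c : ℂ) (R : ℝ)
    (x : ι → ℂ) : ℂ :=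
  (2 * Real.pi * Complex.I)⁻¹ • ∮ z in C(c, R), (z - x i)⁻¹ • f (update x i z)

theorem coordCauchyIntegral_eq_apply {f : (ι → ℂ) → ℂ} {i : ι} {c : ℂ} {R : ℝ} {x : ι → ℂ}
    (hf : DifferentiableOn ℂ (fun z => f (update x i z)) (closedBall c R))
    (hx : x i ∈ ball c R) : coordCauchyIntegral f i c R x = f x := by
  rw [coordCauchyIntegral, hf.circleIntegral_sub_inv_smul hx, update_eq_self,
    inv_smul_smul₀ Complex.two_pi_I_ne_zero]

theorem differentiableAt_coordCauchyIntegral [Fintype ι] {f : (ι → ℂ) → ℂ} {D : Set (ι → ℂ)}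
    (hD : IsOpen D) (hf : DifferentiableOn ℂ f D) {i : ι} {c : ℂ} {R : ℝ} (hR : 0 ≤ R)
    {x₀ : ι → ℂ} (hx₀ : ∀ z ∈ sphere c R, z ≠ x₀ i ∧ update x₀ i z ∈ D) :
    DifferentiableAt ℂ (coordCauchyIntegral f i c R) x₀ := by
  set V : Set ((ι → ℂ) × ℂ) := {p | p.2 ≠ p.1 i ∧ update p.1 i p.2 ∈ D}
  have hV : IsOpen V :=
    (isOpen_ne_fun continuous_snd ((continuous_apply i).comp continuous_fst)).inter
      (hD.preimage (differentiable_update i).continuous)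
  have hG : DifferentiableOn ℂ
      (fun p : (ι → ℂ) × ℂ => (p.2 - p.1 i)⁻¹ • f (update p.1 i p.2)) V := by
    rintro p ⟨hne, hpD⟩
    have hkernel : DifferentiableAt ℂ (fun p : (ι → ℂ) × ℂ => (p.2 - p.1 i)⁻¹) p :=
      (by fun_prop : DifferentiableAt ℂ (fun p : (ι → ℂ) × ℂ => p.2 - p.1 i) p).inv
        (sub_ne_zero.2 hne)
    exact (hkernel.smul ((hf.differentiableAt (hD.mem_nhds hpD)).comp p
      (differentiable_update i p))).differentiableWithinAt
  exact (differentiableAt_circleIntegral_of_differentiableOn_s5 hV hG hR hx₀).fun_const_smul _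

end Coordinate

section Extension

variable {ι : Type*} [Fintype ι] [DecidableEq ι] [Nontrivial ι]

theorem exists_differentiableOn_eqOn_ball_diff_singleton {f : (ι → ℂ) → ℂ} {c : ι → ℂ} {ρ : ℝ}
    (hf : DifferentiableOn ℂ f (ball c ρ \ {c})) :
    ∃ g, DifferentiableOn ℂ g (ball c (ρ / 2)) ∧ EqOn g f (ball c (ρ / 2) \ {c}) := by
  obtain ⟨i, j, hij⟩ := exists_pair_ne ι
  have hD : IsOpen (ball c ρ \ {c}) := isOpen_ball.sdiff isClosed_singleton
  have hslice : ∀ x ∈ ball c (ρ / 2), ∀ z ∈ closedBall (c i) (ρ / 2),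
      (x j ≠ c j ∨ z ≠ c i) → update x i z ∈ ball c ρ \ {c} := by
    intro x hx z hz hne
    have hρ : 0 < ρ := by linarith [dist_nonneg.trans_lt (mem_ball.1 hx)]
    refine ⟨(dist_update_le (mem_ball.1 hx).le hz).trans_lt (half_lt_self hρ), fun hxc => ?_⟩
    rcases hne with hne | hne
    · exact hne (by simpa [update_of_ne hij.symm] using congrFun hxc j)
    · exact hne (by simpa using congrFun hxc i)
  have hxi : ∀ x ∈ ball c (ρ / 2), x i ∈ ball (c i) (ρ / 2) := fun x hx =>
    (dist_le_pi_dist x c i).trans_lt hx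
  have hdiff : DifferentiableOn ℂ (coordCauchyIntegral f i (c i) (ρ / 2)) (ball c (ρ / 2)) := by
    intro x hx
    have hρ : 0 < ρ / 2 := dist_nonneg.trans_lt (mem_ball.1 hx)
    refine (differentiableAt_coordCauchyIntegral hD hf hρ.le fun z hz => ⟨?_, ?_⟩)
      |>.differentiableWithinAt
    · rintro rfl
      exact (mem_ball.1 (hxi x hx)).ne (mem_sphere.1 hz)
    · refine hslice x hx z (sphere_subset_closedBall hz) (Or.inr fun hzc => ?_)
      rw [hzc, mem_sphere, dist_self] at hz
      exact hρ.ne hz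
  have hcauchy : EqOn (coordCauchyIntegral f i (c i) (ρ / 2)) f
      (ball c (ρ / 2) ∩ {x | x j ≠ c j}) := by
    rintro x ⟨hx, hxj⟩
    refine coordCauchyIntegral_eq_apply (fun z hz => ?_) (hxi x hx)
    have hupd : DifferentiableAt ℂ (fun z => update x i z) z :=
      (differentiable_update (𝕜 := ℂ) i).differentiableAt.comp (f := fun z : ℂ => (x, z)) z
        (by fun_prop)
    exact ((hf.differentiableAt (hD.mem_nhds (hslice x hx z hz (Or.inl hxj)))).comp z
      hupd).differentiableWithinAt
  have hsub : ball c (ρ / 2) \ {c} ⊆ ball c ρ \ {c} := fun x ⟨hx, hxc⟩ =>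
    ⟨ball_subset_ball (by linarith [dist_nonneg.trans_lt (mem_ball.1 hx)]) hx, hxc⟩
  have hdense : Dense {x : ι → ℂ | x j ≠ c j} :=
    (dense_compl_singleton (c j)).preimage (isOpenMap_eval j)
  refine ⟨_, hdiff, (hcauchy.mono (inter_subset_inter_left _ sdiff_subset)).of_subset_closure
    (hdiff.mono sdiff_subset).continuousOn (hf.mono hsub).continuousOn inter_subset_left
    (hdense.open_subset_closure_inter (isOpen_ball.sdiff isClosed_singleton))⟩

theorem exists_differentiableOn_eqOn_diff_singleton {U : Set (ι → ℂ)} (hU : IsOpen U)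
    {f : (ι → ℂ) → ℂ} (c : ι → ℂ) (hf : DifferentiableOn ℂ f (U \ {c})) :
    ∃ F, DifferentiableOn ℂ F U ∧ EqOn F f (U \ {c}) := by
  by_cases hc : c ∉ U
  · exact ⟨f, by rwa [sdiff_singleton_eq_self hc] at hf, fun _ _ => rfl⟩
  obtain ⟨ρ, hρ, hρU⟩ := Metric.isOpen_iff.1 hU c (not_not.1 hc)
  obtain ⟨g, hgd, hgf⟩ := exists_differentiableOn_eqOn_ball_diff_singleton
    (hf.mono (sdiff_subset_sdiff_left hρU))
  refine ⟨update f c (g c), fun y hy => ?_, fun y hy => update_of_ne hy.2 _ _⟩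
  rcases eq_or_ne y c with rfl | hyc
  · have hFg : EqOn (update f y (g y)) g (ball y (ρ / 2)) := by
      intro x hx
      rcases eq_or_ne x y with rfl | hxy
      · exact update_self _ _ _
      · rw [update_of_ne hxy]
        exact (hgf ⟨hx, hxy⟩).symm
    have hball : ball y (ρ / 2) ∈ 𝓝 y := ball_mem_nhds y (half_pos hρ)
    exact ((hgd.differentiableAt hball).congr_of_eventuallyEq
      (eventuallyEq_of_mem hball hFg)).differentiableWithinAt
  · have hnhds : U \ {c} ∈ 𝓝 y := (hU.sdiff isClosed_singleton).mem_nhds ⟨hy, hyc⟩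
    exact ((hf.differentiableAt hnhds).congr_of_eventuallyEq
      (eventuallyEq_of_mem hnhds fun x hx => update_of_ne hx.2 _ _)).differentiableWithinAt

theorem exists_differentiableOn_eqOn_diff_of_finite {S : Set (ι → ℂ)} (hS : S.Finite) :
    ∀ {U : Set (ι → ℂ)}, IsOpen U → ∀ {f : (ι → ℂ) → ℂ}, DifferentiableOn ℂ f (U \ S) →
      ∃ F, DifferentiableOn ℂ F U ∧ EqOn F f (U \ S) := by
  induction S, hS using Set.Finite.induction_on with
  | empty => exact fun _ f hf => ⟨f, by simpa using hf, fun _ _ => rfl⟩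
  | @insert a S _ _ ih =>
    intro U hU f hf
    have hset : U \ insert a S = (U \ {a}) \ S := by rw [sdiff_sdiff, ← insert_eq]
    rw [hset] at hf ⊢
    obtain ⟨G, hGd, hGf⟩ := ih (hU.sdiff isClosed_singleton) hf
    obtain ⟨F, hFd, hFG⟩ := exists_differentiableOn_eqOn_diff_singleton hU a hGd
    exact ⟨F, hFd, fun x hx => (hFG hx.1).trans (hGf hx)⟩

end Extension

theorem Set.EqOn.of_diff_countable {E Y : Type*} [NormedAddCommGroup E] [NormedSpace ℝ E]
    [Nontrivial E] [TopologicalSpace Y] [T2Space Y] {U S : Set E} {f g : E → Y}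
    (hU : IsOpen U) (hS : S.Countable) (hf : ContinuousOn f U) (hg : ContinuousOn g U)
    (h : EqOn f g (U \ S)) : EqOn f g U :=
  h.of_subset_closure hf hg sdiff_subset
    (by simpa only [sdiff_eq] using (hS.dense_compl ℝ).open_subset_closure_inter hU)

theorem hartogs_extension_finite_general (n : ℕ) (hn : 2 ≤ n) (U S : Set (Fin n → ℂ))
    (hU : IsOpen U) (hS : S.Finite)
    (f : (Fin n → ℂ) → ℂ) (hf : DifferentiableOn ℂ f (U \ S)) :
    ∃ F : (Fin n → ℂ) → ℂ,
      DifferentiableOn ℂ F U ∧ EqOn F f (U \ S) ∧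
      ∀ F' : (Fin n → ℂ) → ℂ, DifferentiableOn ℂ F' U → EqOn F' f (U \ S) →
        EqOn F' F U := by
  have : Nontrivial (Fin n) := Fin.nontrivial_iff_two_le.2 hn
  obtain ⟨F, hFd, hFf⟩ := exists_differentiableOn_eqOn_diff_of_finite hS hU hf
  exact ⟨F, hFd, hFf, fun F' hF'd hF'f => (hF'f.trans hFf.symm).of_diff_countable hU
    hS.countable hF'd.continuousOn hFd.continuousOn⟩

/-- Hartogs-type extension across a finite set: for `n ≥ 2`, `U ⊆ ℂⁿ` open and
connected and `S ⊂ U` finite, every function holomorphic on `U ∖ S` extends uniquely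
to a holomorphic function on `U`. -/
theorem hartogs_extension_finite (n : ℕ) (hn : 2 ≤ n) (U S : Set (Fin n → ℂ))
    (hU : IsOpen U) (hUc : IsConnected U) (hS : S.Finite) (hSU : S ⊆ U)
    (f : (Fin n → ℂ) → ℂ) (hf : DifferentiableOn ℂ f (U \ S)) :
    ∃ F : (Fin n → ℂ) → ℂ,
      DifferentiableOn ℂ F U ∧ EqOn F f (U \ S) ∧
      ∀ F' : (Fin n → ℂ) → ℂ, DifferentiableOn ℂ F' U → EqOn F' f (U \ S) →
        EqOn F' F U :=
  hartogs_extension_finite_general n hn U S hU hS f hf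
end
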